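/- Fix λ > 0 and let m* be the smallest positive integer m with 1/m ≤ 2λ². There exist C > 0 and a positive integer N₀ such that for every integer N ≥ N₀, with h = 1/(λN) and s_{m*} = (2/h) arcsin(1/√(2λ²m*)), and for every x ∈ ℝ, | (1/π) ∫_{s_{m*}}^{π/h} P_N(ξ(s)) cos(sx) ds | ≤ C h^{1/λ²} / √(log(1/h)). -/

import Mathlib

/-- The Crank–Nicolson Fourier symbol `P_N(ξ) = ∏_{m=0}^{N-1} (1 - mξ)/(1 + (m+1)ξ)`. -/
noncomputable def P (N : ℕ) (ξ : ℝ) : ℝ :=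
  ∏ m ∈ Finset.range N, (1 - (m : ℝ) * ξ) / (1 + ((m : ℝ) + 1) * ξ)

/-- `ξ(s) = 2λ² sin²(sh/2)`. -/
noncomputable def xi (lam h s : ℝ) : ℝ := 2 * lam ^ 2 * Real.sin (s * h / 2) ^ 2

open Real Finset MeasureTheory

/-! For `ξ ≥ 1/m₀` every factor of `P_N(ξ)` has modulus at most `1`, and for `m ≥ m₀` (where
`mξ ≥ 1`) the factor equals `1 - (1 + 2/ξ)/(m + 1 + 1/ξ) ≤ exp (-(1 + 2/ξ)/(m + 1 + m₀))`;
comparing the resulting harmonic sum with a logarithm gives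
`|P_N(ξ)| ≤ (N/(2m₀ + 1))^{-(1 + 2/ξ)}`. In regime IV we have `ξ(s) ≥ 1/m*`, and Jordan's
inequality `cos (sh/2) ≥ 1 - sh/π` gives `2/ξ(s) ≥ (1 + (1 - sh/π)²)/λ²`. So the integrand is
bounded by `((2m* + 1)λh)^{1 + 1/λ²}` times a Gaussian centred at `π/h` of variance
`≍ 1/(h² log N)`, whose integral contributes the factor `1/(h √(log (1/h)))`. -/

lemma abs_one_sub_mul_div_le_one {ξ : ℝ} (hξ : 0 ≤ ξ) (m : ℕ) :
    |1 - m * ξ| / (1 + (m + 1) * ξ) ≤ 1 := by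
  have hmξ : 0 ≤ (m : ℝ) * ξ := by positivity
  rw [div_le_one (by positivity), abs_le]
  constructor <;> linarith

lemma abs_one_sub_mul_div_le_exp {ξ : ℝ} (hξ : 0 < ξ) {m : ℕ} (hm : 1 ≤ m * ξ) :
    |1 - m * ξ| / (1 + (m + 1) * ξ) ≤ exp (-((1 + 2 / ξ) / (m + 1 + 1 / ξ))) := by
  have hfactor : |1 - m * ξ| / (1 + (m + 1) * ξ) = -((1 + 2 / ξ) / (m + 1 + 1 / ξ)) + 1 := by
    rw [abs_of_nonpos (by linarith)]
    field_simp
    ring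
  exact hfactor ▸ add_one_le_exp _

lemma log_div_le_sum_Ico_inv {c : ℝ} (hc : 0 < c) {a b : ℕ} (hab : a ≤ b) :
    log ((b + c) / (a + c)) ≤ ∑ m ∈ Ico a b, 1 / (m + c) := by
  induction b, hab using Nat.le_induction with
  | base => simp [div_self (by positivity : (a : ℝ) + c ≠ 0)]
  | succ n han ih =>
    have hstep : log ((n + 1 + c) / (n + c)) ≤ 1 / (n + c) := by
      have := log_le_sub_one_of_pos (x := (n + 1 + c) / (n + c)) (by positivity)
      rwa [show (n + 1 + c) / (n + c) - 1 = 1 / (n + c) by field_simp; ring] at this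
    have hsplit : ((n + 1 : ℕ) + c) / (a + c) = (n + c) / (a + c) * ((n + 1 + c) / (n + c)) := by
      push_cast
      field_simp
    rw [sum_Ico_succ_top han, hsplit, log_mul (by positivity) (by positivity)]
    exact add_le_add ih hstep

theorem abs_P_le_exp {m₀ N : ℕ} (hm₀ : 0 < m₀) (hN : m₀ ≤ N) {ξ : ℝ} (hξ : 1 / m₀ ≤ ξ) :
    |P N ξ| ≤ exp (-(1 + 2 / ξ) * log (N / (2 * m₀ + 1))) := by
  have hξ0 : 0 < ξ := lt_of_lt_of_le (by positivity) hξ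
  have hinvξ : 1 / ξ ≤ m₀ := by
    rw [div_le_iff₀ (by positivity)] at hξ
    rw [div_le_iff₀ hξ0]
    linarith
  set f : ℕ → ℝ := fun m => |1 - m * ξ| / (1 + (m + 1) * ξ)
  have hf0 : ∀ m, 0 ≤ f m := fun m => by positivity
  have habs : |P N ξ| = ∏ m ∈ range N, f m := by
    rw [P, abs_prod]
    refine prod_congr rfl fun m _ => ?_
    rw [abs_div, abs_of_pos (show (0 : ℝ) < 1 + (m + 1) * ξ by positivity)]
  have hlow : ∏ m ∈ Ico 0 m₀, f m ≤ 1 :=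
    prod_le_one (fun m _ => hf0 m) fun m _ => abs_one_sub_mul_div_le_one hξ0.le m
  have hsum : (1 + 2 / ξ) * log (N / (2 * m₀ + 1))
      ≤ ∑ m ∈ Ico m₀ N, (1 + 2 / ξ) / (m + 1 + 1 / ξ) := by
    have hNpos : (0 : ℝ) < N := by exact_mod_cast hm₀.trans_le hN
    calc (1 + 2 / ξ) * log (N / (2 * m₀ + 1))
        ≤ (1 + 2 / ξ) * log ((N + (m₀ + 1)) / (m₀ + (m₀ + 1))) := by
          rw [show (m₀ : ℝ) + (m₀ + 1) = 2 * m₀ + 1 by ring]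
          gcongr
          linarith
      _ ≤ (1 + 2 / ξ) * ∑ m ∈ Ico m₀ N, 1 / ((m : ℝ) + (m₀ + 1)) := by
          gcongr
          exact log_div_le_sum_Ico_inv (by positivity) hN
      _ ≤ _ := by
          rw [mul_sum]
          refine sum_le_sum fun m _ => ?_
          rw [mul_one_div]
          exact div_le_div_of_nonneg_left (by positivity) (by positivity) (by linarith)
  have hhigh : ∏ m ∈ Ico m₀ N, f m ≤ exp (-(1 + 2 / ξ) * log (N / (2 * m₀ + 1))) :=
    calc ∏ m ∈ Ico m₀ N, f m
        ≤ ∏ m ∈ Ico m₀ N, exp (-((1 + 2 / ξ) / (m + 1 + 1 / ξ))) := by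
          refine prod_le_prod (fun m _ => hf0 m) fun m hm => abs_one_sub_mul_div_le_exp hξ0 ?_
          have : (m₀ : ℝ) ≤ m := by exact_mod_cast (mem_Ico.mp hm).1
          rw [div_le_iff₀ hξ0] at hinvξ
          nlinarith
      _ ≤ _ := by
          rw [← exp_sum, sum_neg_distrib]
          gcongr
          linarith
  rw [habs, range_eq_Ico, ← prod_Ico_consecutive _ (Nat.zero_le m₀) hN]
  calc (∏ m ∈ Ico 0 m₀, f m) * ∏ m ∈ Ico m₀ N, f m ≤ 1 * ∏ m ∈ Ico m₀ N, f m :=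
        mul_le_mul_of_nonneg_right hlow (prod_nonneg fun m _ => hf0 m)
    _ ≤ _ := (one_mul _).trans_le hhigh

lemma continuous_P_comp (N : ℕ) {f : ℝ → ℝ} (hf : Continuous f) (hf0 : ∀ s, 0 ≤ f s) :
    Continuous fun s => P N (f s) := by
  unfold P
  refine continuous_finsetProd _ fun m _ => ?_
  refine (continuous_const.sub (continuous_const.mul hf)).div
    (continuous_const.add (continuous_const.mul hf)) fun s => ?_
  have := hf0 s
  positivity

lemma one_add_sq_one_sub_mul_le_one_div_sin_sq {u : ℝ} (hu₀ : 0 ≤ u) (hu : u ≤ π / 2)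
    (hsin : sin u ≠ 0) : 1 + (1 - 2 / π * u) ^ 2 ≤ 1 / sin u ^ 2 := by
  have hcos : 1 - 2 / π * u ≤ cos u := one_sub_mul_le_cos hu₀ hu
  have hnonneg : 0 ≤ 1 - 2 / π * u := by
    rw [sub_nonneg, div_mul_eq_mul_div, div_le_one pi_pos]
    linarith
  have hsin_sq : sin u ^ 2 ≤ 1 := sin_sq_le_one u
  have hcos_sq : (1 - 2 / π * u) ^ 2 ≤ cos u ^ 2 := pow_le_pow_left₀ hnonneg hcos 2
  rw [le_div_iff₀ (by positivity)]
  nlinarith [sin_sq_add_cos_sq u, mul_le_mul_of_nonneg_left hsin_sq (sq_nonneg (cos u))]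

section

variable {lam h s : ℝ}

lemma xi_nonneg (lam h s : ℝ) : 0 ≤ xi lam h s := by
  unfold xi
  positivity

lemma continuous_xi (lam h : ℝ) : Continuous (xi lam h) := by
  unfold xi
  fun_prop

lemma one_div_le_xi (hlam : 0 < lam) (hh : 0 < h) {m : ℕ} (hm : 0 < m)
    (hmle : 1 / (m : ℝ) ≤ 2 * lam ^ 2)
    (hs : (2 / h) * arcsin (1 / √(2 * lam ^ 2 * m)) ≤ s) (hs' : s ≤ π / h) :
    1 / (m : ℝ) ≤ xi lam h s := by
  set r := 1 / √(2 * lam ^ 2 * m)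
  have hX : (0 : ℝ) < 2 * lam ^ 2 * m := by positivity
  have hr₀ : 0 ≤ r := by positivity
  have hr₁ : r ≤ 1 := by
    rw [div_le_one (sqrt_pos.mpr hX), one_le_sqrt]
    rw [div_le_iff₀ (by positivity)] at hmle
    linarith
  have hr_sq : r ^ 2 = 1 / (2 * lam ^ 2 * m) := by
    rw [div_pow, one_pow, sq_sqrt hX.le]
  have harcsin : arcsin r ≤ s * h / 2 := by
    rw [div_mul_eq_mul_div, div_le_iff₀ hh] at hs
    linarith
  have hu : s * h / 2 ≤ π / 2 := by
    rw [le_div_iff₀ hh] at hs'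
    linarith
  have hsin : r ≤ sin (s * h / 2) :=
    (arcsin_le_iff_le_sin ⟨by linarith, hr₁⟩
      ⟨by linarith [arcsin_nonneg.mpr hr₀, pi_pos], hu⟩).mp harcsin
  have hsin_sq : 1 / (2 * lam ^ 2 * m) ≤ sin (s * h / 2) ^ 2 :=
    hr_sq ▸ pow_le_pow_left₀ hr₀ hsin 2
  rw [xi, div_le_iff₀ (by positivity)]
  rw [div_le_iff₀ hX] at hsin_sq
  linarith

lemma one_add_sq_div_le_two_div_xi (hh : 0 < h) (hs₀ : 0 ≤ s) (hs : s ≤ π / h)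
    (hxi : 0 < xi lam h s) : (1 + (1 - s * h / π) ^ 2) / lam ^ 2 ≤ 2 / xi lam h s := by
  have hsin : sin (s * h / 2) ≠ 0 := by
    rintro hzero
    simp [xi, hzero] at hxi
  have hlam : lam ≠ 0 := by
    rintro rfl
    simp [xi] at hxi
  have hu : s * h / 2 ≤ π / 2 := by
    rw [le_div_iff₀ hh] at hs
    linarith
  have key := one_add_sq_one_sub_mul_le_one_div_sin_sq (by positivity) hu hsin
  rw [show 2 / π * (s * h / 2) = s * h / π by ring] at key
  calc (1 + (1 - s * h / π) ^ 2) / lam ^ 2 ≤ 1 / sin (s * h / 2) ^ 2 / lam ^ 2 := by gcongr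
    _ = 2 / xi lam h s := by
      rw [xi]
      field_simp

lemma abs_P_xi_le_gaussian (hlam : 0 < lam) (hh : 0 < h) {m N : ℕ} (hm : 0 < m) (hmN : m ≤ N)
    (hmle : 1 / (m : ℝ) ≤ 2 * lam ^ 2) (hL : 0 ≤ log (N / (2 * m + 1)))
    (hs : (2 / h) * arcsin (1 / √(2 * lam ^ 2 * m)) ≤ s) (hs' : s ≤ π / h) :
    |P N (xi lam h s)| ≤ exp (-(1 + 1 / lam ^ 2) * log (N / (2 * m + 1))) *
      exp (-(log (N / (2 * m + 1)) * h ^ 2 / (lam ^ 2 * π ^ 2)) * (s - π / h) ^ 2) := by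
  set L := log (N / (2 * m + 1))
  have hxi := one_div_le_xi hlam hh hm hmle hs hs'
  have hs₀ : 0 ≤ s := (mul_nonneg (by positivity) (arcsin_nonneg.mpr (by positivity))).trans hs
  have hdecay := one_add_sq_div_le_two_div_xi hh hs₀ hs' (lt_of_lt_of_le (by positivity) hxi)
  have hgauss : (1 - s * h / π) ^ 2 = h ^ 2 * (s - π / h) ^ 2 / π ^ 2 := by
    field_simp
    ring
  rw [hgauss] at hdecay
  calc |P N (xi lam h s)| ≤ exp (-(1 + 2 / xi lam h s) * L) := abs_P_le_exp hm hmN hxi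
    _ ≤ _ := by
      rw [← exp_add]
      gcongr
      have := mul_le_mul_of_nonneg_right hdecay hL
      field_simp at this ⊢
      linear_combination this

lemma abs_intervalIntegral_le_of_abs_le_gaussian {f : ℝ → ℝ} {a d b c A : ℝ} (had : a ≤ d)
    (hb : 0 < b) (hA : 0 ≤ A) (hf : IntervalIntegrable f volume a d)
    (hbound : ∀ s ∈ Set.Icc a d, |f s| ≤ A * exp (-b * (s - c) ^ 2)) :
    |∫ s in a..d, f s| ≤ A * √(π / b) := by
  have hg : Integrable fun s => A * exp (-b * (s - c) ^ 2) :=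
    ((integrable_exp_neg_mul_sq hb).comp_sub_right c).const_mul A
  calc |∫ s in a..d, f s| ≤ ∫ s in a..d, |f s| := intervalIntegral.abs_integral_le_integral_abs had
    _ ≤ ∫ s in a..d, A * exp (-b * (s - c) ^ 2) :=
      intervalIntegral.integral_mono_on had hf.abs hg.intervalIntegrable hbound
    _ ≤ ∫ s, A * exp (-b * (s - c) ^ 2) := by
      rw [intervalIntegral.integral_of_le had]
      exact setIntegral_le_integral hg (.of_forall fun s => by positivity)
    _ = A * √(π / b) := by
      rw [integral_const_mul,
        integral_sub_right_eq_self (fun y => exp (-b * y ^ 2)) c, integral_gaussian]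

lemma exp_mul_sqrt_pi_div_eq {K lam h L p : ℝ} (hK : 0 < K) (hlam : 0 < lam) (hh : 0 < h)
    (hL : L = log (1 / (K * lam * h))) (hL₀ : 0 < L) :
    1 / π * (exp (-(1 + p) * L) * √(π / (L * h ^ 2 / (lam ^ 2 * π ^ 2))))
      = √π * K * lam ^ 2 * (K * lam) ^ p * h ^ p / √L := by
  have hexp : exp (-(1 + p) * L) = K * lam * h * ((K * lam) ^ p * h ^ p) := by
    rw [show -(1 + p) * L = -L * (1 + p) by ring, exp_mul, hL, exp_neg,
      exp_log (by positivity), inv_div, div_one, rpow_add (by positivity), rpow_one,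
      mul_rpow (by positivity) hh.le]
  have hsqrt : √(π / (L * h ^ 2 / (lam ^ 2 * π ^ 2))) = π * √π * lam / (h * √L) := by
    rw [← sqrt_sq (by positivity : 0 ≤ π * √π * lam / (h * √L))]
    congr 1
    rw [div_pow, mul_pow, mul_pow, mul_pow, sq_sqrt pi_pos.le, sq_sqrt hL₀.le]
    field_simp
  have : 0 < √L := sqrt_pos.mpr hL₀
  rw [hexp, hsqrt]
  field_simp

theorem abs_integral_regimeIV_le (hlam : 0 < lam) {m N : ℕ} (hm : 0 < m)
    (hmle : 1 / (m : ℝ) ≤ 2 * lam ^ 2) (hN : 2 * (m : ℝ) + 1 < N) (hh : h = 1 / (lam * N))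
    (x : ℝ) :
    |(1 / π) * ∫ s in ((2 / h) * arcsin (1 / √(2 * lam ^ 2 * m)))..(π / h),
        P N (xi lam h s) * cos (s * x)|
      ≤ √π * (2 * m + 1) * lam ^ 2 * ((2 * m + 1) * lam) ^ (1 / lam ^ 2) * h ^ (1 / lam ^ 2)
        / √(log (N / (2 * m + 1))) := by
  set L := log (N / (2 * m + 1))
  have hN₀ : (0 : ℝ) < N := by linarith
  have hmN : m ≤ N := by exact_mod_cast (show (m : ℝ) ≤ N by linarith)
  have hh₀ : 0 < h := by rw [hh]; positivity
  have hL₀ : 0 < L := log_pos ((one_lt_div (by positivity)).mpr hN)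
  have hLh : L = log (1 / ((2 * m + 1) * lam * h)) := by
    rw [hh, show 1 / ((2 * m + 1) * lam * (1 / (lam * N))) = N / (2 * m + 1) by field_simp]
  have hstart : (2 / h) * arcsin (1 / √(2 * lam ^ 2 * m)) ≤ π / h := by
    rw [div_mul_eq_mul_div]
    gcongr
    linarith [arcsin_le_pi_div_two (1 / √(2 * lam ^ 2 * m))]
  have hintegrand : Continuous fun s => P N (xi lam h s) * cos (s * x) :=
    (continuous_P_comp N (continuous_xi lam h) (xi_nonneg lam h)).mul (by fun_prop)
  have hint := abs_intervalIntegral_le_of_abs_le_gaussian hstart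
    (b := L * h ^ 2 / (lam ^ 2 * π ^ 2)) (by positivity) (exp_pos _).le
    (hintegrand.intervalIntegrable _ _) fun s hs =>
      ((abs_mul _ _).trans_le (mul_le_of_le_one_right (abs_nonneg _) (abs_cos_le_one _))).trans
        (abs_P_xi_le_gaussian hlam hh₀ hm hmN hmle hL₀.le hs.1 hs.2)
  rw [abs_mul, abs_of_pos (by positivity : 0 < 1 / π),
    ← exp_mul_sqrt_pi_div_eq (by positivity) hlam hh₀ hLh hL₀]
  gcongr

end

/-- the contribution of wave number regime IV `[s_{m*}, π/h]` to the
error is `O(h^{1/λ²}/√(log(1/h)))`, uniformly in `x`; here `m*` is the smallest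
positive integer with `1/m ≤ 2λ²`, `h = 1/(λN)`, and
`s_{m*} = (2/h) arcsin(1/√(2λ²m*))`. -/
theorem stmt16 (lam : ℝ) (hlam : 0 < lam) (mstar : ℕ)
    (hmstar : IsLeast {m : ℕ | 0 < m ∧ 1 / (m : ℝ) ≤ 2 * lam ^ 2} mstar) :
    ∃ C > (0 : ℝ), ∃ N₀ : ℕ, 0 < N₀ ∧ ∀ N : ℕ, N₀ ≤ N →
      ∀ h : ℝ, h = 1 / (lam * N) → ∀ x : ℝ,
      |(1 / Real.pi) * ∫ s in
          ((2 / h) * Real.arcsin (1 / Real.sqrt (2 * lam ^ 2 * mstar)))..(Real.pi / h),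
          P N (xi lam h s) * Real.cos (s * x)|
        ≤ C * h ^ (1 / lam ^ 2) / Real.sqrt (Real.log (1 / h)) := by
  obtain ⟨⟨hm, hmle⟩, -⟩ := hmstar
  set K : ℝ := 2 * mstar + 1
  set p : ℝ := 1 / lam ^ 2
  refine ⟨√2 * (√π * K * lam ^ 2 * (K * lam) ^ p), by positivity,
    ⌈lam * K ^ 2 + 1 / lam + K⌉₊ + 1, Nat.succ_pos _, fun N hN h hh x => ?_⟩
  have hN' : lam * K ^ 2 + 1 / lam + K < N := by
    have hceil := Nat.le_ceil (lam * K ^ 2 + 1 / lam + K)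
    have : (⌈lam * K ^ 2 + 1 / lam + K⌉₊ : ℝ) + 1 ≤ N := by exact_mod_cast hN
    linarith
  have hK : 0 < K := by positivity
  have hKN : K < N := by linarith [show 0 < lam * K ^ 2 + 1 / lam by positivity]
  have hN₀ : (0 : ℝ) < N := hK.trans hKN
  have hh₀ : 0 < h := by rw [hh]; positivity
  have hinvh : 1 / h = lam * N := by rw [hh, one_div_one_div]
  have hlog₀ : 0 < log (1 / h) := by
    refine log_pos (hinvh ▸ ?_)
    rw [← div_lt_iff₀' hlam]
    linarith [show 0 < lam * K ^ 2 + K by positivity]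
  have hlog : log (1 / h) ≤ 2 * log (N / K) := by
    rw [show 2 * log (N / K) = log ((N / K) ^ 2) by rw [log_pow]; norm_num, hinvh]
    refine log_le_log (by positivity) ?_
    rw [div_pow, le_div_iff₀ (by positivity)]
    nlinarith [show lam * K ^ 2 ≤ N by linarith [show 0 < 1 / lam + K by positivity]]
  calc _ ≤ √π * K * lam ^ 2 * (K * lam) ^ p * h ^ p / √(log (N / K)) :=
        abs_integral_regimeIV_le hlam hm hmle hKN hh x
    _ = √2 * (√π * K * lam ^ 2 * (K * lam) ^ p) * h ^ p / √(2 * log (N / K)) := by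
        rw [sqrt_mul zero_le_two]
        field_simp
    _ ≤ _ := div_le_div_of_nonneg_left (by positivity) (sqrt_pos.mpr hlog₀) (sqrt_le_sqrt hlog)
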